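/- arXiv:2502.07484 — 3 statements merged into one kernel-verified Lean document; each statement's English description precedes it below -/
import Mathlib

section
/- If the matrices A_1,...,A_K have a common nontrivial invariant subspace V \subset \mathbb{C}^n (0 \ne V \ne \mathbb{C}^n), then f_{\mathcal{A}} does not blow up at every nonzero non-invertible matrix; more precisely, there exists a sequence of invertible matrices U_m converging to a nonzero non-invertible matrix U_0 along which f_{\mathcal{A}}(U_m) stays bounded. -/
noncomputable section

open Matrix Filter

attribute [local instance] Matrix.frobeniusNormedAddCommGroup

/-- The joint diagonalization functional. -/
def jdFun {n K : ℕ} (A : Fin K → Matrix (Fin n) (Fin n) ℂ)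
    (U : Matrix (Fin n) (Fin n) ℂ) : ℝ :=
  (1 / 2) * ∑ k, ∑ i, ∑ j,
    if i = j then 0 else ‖(U⁻¹ * A k * U) i j‖ ^ 2

/-! Let `P` be an idempotent with range `V` and `U_s = P + s (1 - P)`. Invariance of `V` gives
`(1 - P) A_k P = 0`, so `U_s⁻¹ A_k U_s = P A_k P + s P A_k (1 - P) + (1 - P) A_k (1 - P)` has no
`s⁻¹` term and stays bounded for `|s| ≤ 1`. As `s → 0`, `U_s → P`, which is neither `0` (as
`V ≠ 0`) nor invertible (as `V ≠ ℂⁿ`). -/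

attribute [local instance] Matrix.frobeniusNormedSpace

section RescaleKer

variable {𝕜 R : Type*} [Field 𝕜] [Ring R] [Algebra 𝕜 R]

/-- For idempotent `p`, this acts as the identity on the range of `p` and as `s` on its kernel. -/
def rescaleKer (p : R) (s : 𝕜) : R := p + s • (1 - p)

variable {p : R}

theorem rescaleKer_zero (p : R) : rescaleKer p (0 : 𝕜) = p := by
  simp [rescaleKer]

theorem rescaleKer_one (p : R) : rescaleKer p (1 : 𝕜) = 1 := by
  simp [rescaleKer]

theorem IsIdempotentElem.rescaleKer_mul_rescaleKer (hp : IsIdempotentElem p) (s t : 𝕜) :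
    rescaleKer p s * rescaleKer p t = rescaleKer p (s * t) := by
  simp only [rescaleKer, add_mul, mul_add, smul_mul_assoc, mul_smul_comm, smul_smul,
    hp.eq, hp.mul_one_sub_self, hp.one_sub_mul_self, hp.one_sub.eq, smul_zero, add_zero, zero_add]
  ring_nf

theorem IsIdempotentElem.rescaleKer_inv_mul_rescaleKer (hp : IsIdempotentElem p) {s : 𝕜}
    (hs : s ≠ 0) : rescaleKer p s⁻¹ * rescaleKer p s = 1 := by
  rw [hp.rescaleKer_mul_rescaleKer, inv_mul_cancel₀ hs, rescaleKer_one]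

theorem IsIdempotentElem.isUnit_rescaleKer (hp : IsIdempotentElem p) {s : 𝕜} (hs : s ≠ 0) :
    IsUnit (rescaleKer p s) :=
  ⟨⟨_, _, by rw [hp.rescaleKer_mul_rescaleKer, mul_inv_cancel₀ hs, rescaleKer_one],
    hp.rescaleKer_inv_mul_rescaleKer hs⟩, rfl⟩

theorem rescaleKer_inv_mul_mul_rescaleKer {a : R} (ha : p * a * p = a * p) {s : 𝕜} (hs : s ≠ 0) :
    rescaleKer p s⁻¹ * a * rescaleKer p s =
      p * a * p + s • (p * a * (1 - p)) + (1 - p) * a * (1 - p) := by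
  have hker : (1 - p) * a * p = 0 := by rw [sub_mul, sub_mul, one_mul, ha, sub_self]
  simp only [rescaleKer, add_mul, mul_add, smul_mul_assoc, mul_smul_comm, smul_add, smul_smul,
    mul_inv_cancel₀ hs, one_smul, hker, smul_zero, add_zero]
  abel

theorem continuous_rescaleKer [TopologicalSpace 𝕜] [TopologicalSpace R] [ContinuousAdd R]
    [ContinuousSMul 𝕜 R] (p : R) : Continuous (rescaleKer p : 𝕜 → R) :=
  continuous_const.add (continuous_id.smul continuous_const)

end RescaleKer

theorem Matrix.frobenius_norm_sq {m n α : Type*} [Fintype m] [Fintype n] [NormedAddCommGroup α]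
    (M : Matrix m n α) : ‖M‖ ^ 2 = ∑ i, ∑ j, ‖M i j‖ ^ 2 := by
  simp only [frobenius_norm_def, ← Real.sqrt_eq_rpow, Real.rpow_two]
  exact Real.sq_sqrt (by positivity)

theorem jdFun_le_half_sum_norm_sq {n K : ℕ} (A : Fin K → Matrix (Fin n) (Fin n) ℂ)
    (U : Matrix (Fin n) (Fin n) ℂ) : jdFun A U ≤ 1 / 2 * ∑ k, ‖U⁻¹ * A k * U‖ ^ 2 := by
  simp only [jdFun, Matrix.frobenius_norm_sq]
  gcongr with k _ i _ j _
  split_ifs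
  exacts [by positivity, le_rfl]

theorem Matrix.norm_rescaleKer_conj_le {ι 𝕜 : Type*} [Fintype ι] [DecidableEq ι] [NormedField 𝕜]
    {P A : Matrix ι ι 𝕜} (hP : IsIdempotentElem P) (hPA : P * A * P = A * P) {s : 𝕜}
    (hs0 : s ≠ 0) (hs1 : ‖s‖ ≤ 1) :
    ‖(rescaleKer P s)⁻¹ * A * rescaleKer P s‖ ≤
      ‖P * A * P‖ + ‖P * A * (1 - P)‖ + ‖(1 - P) * A * (1 - P)‖ := by
  rw [Matrix.inv_eq_left_inv (hP.rescaleKer_inv_mul_rescaleKer hs0),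
    rescaleKer_inv_mul_mul_rescaleKer hPA hs0]
  refine (norm_add₃_le ..).trans ?_
  gcongr
  rw [norm_smul]
  exact mul_le_of_le_one_left (norm_nonneg _) hs1

theorem Submodule.exists_isIdempotentElem_range_eq {K E : Type*} [DivisionRing K]
    [AddCommGroup E] [Module K E] (V : Submodule K E) :
    ∃ f : Module.End K E, IsIdempotentElem f ∧ LinearMap.range f = V :=
  let ⟨W, hVW⟩ := V.exists_isCompl
  ⟨V.projection W hVW, isIdempotentElem_projection hVW, range_projection hVW⟩

theorem exists_isIdempotentElem_matrix_of_invtSubmodule {ι κ 𝕜 : Type*} [Fintype ι]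
    [DecidableEq ι] [Field 𝕜] (A : κ → Matrix ι ι 𝕜) (V : Submodule 𝕜 (ι → 𝕜)) (hV0 : V ≠ ⊥)
    (hV1 : V ≠ ⊤) (hinv : ∀ k, ∀ x ∈ V, (A k).mulVec x ∈ V) :
    ∃ P : Matrix ι ι 𝕜, IsIdempotentElem P ∧ P ≠ 0 ∧ P ≠ 1 ∧ ∀ k, P * A k * P = A k * P := by
  obtain ⟨f, hf, hfV⟩ := V.exists_isIdempotentElem_range_eq
  refine ⟨LinearMap.toMatrixAlgEquiv' f, hf.map _, ?_, ?_, fun k => ?_⟩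
  · rw [Ne, map_eq_zero_iff _ LinearMap.toMatrixAlgEquiv'.injective]
    rintro rfl
    exact hV0 (by rw [← hfV, LinearMap.range_zero])
  · rw [Ne, map_eq_one_iff _ LinearMap.toMatrixAlgEquiv'.injective]
    rintro rfl
    exact hV1 (by rw [← hfV, Module.End.one_eq_id, LinearMap.range_id])
  · have hVk : LinearMap.range f ∈ Module.End.invtSubmodule (Matrix.toLinAlgEquiv' (A k)) := by
      rw [hfV, Module.End.mem_invtSubmodule]
      exact hinv k
    have := congrArg LinearMap.toMatrixAlgEquiv'
      ((LinearMap.IsIdempotentElem.range_mem_invtSubmodule_iff hf).mp hVk)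
    simpa only [← Module.End.mul_eq_comp, map_mul,
      LinearMap.toMatrixAlgEquiv'_toLinAlgEquiv', ← mul_assoc] using this

theorem jdFun_rescaleKer_le {n K : ℕ} {A : Fin K → Matrix (Fin n) (Fin n) ℂ}
    {P : Matrix (Fin n) (Fin n) ℂ} (hP : IsIdempotentElem P) (hPA : ∀ k, P * A k * P = A k * P)
    {s : ℂ} (hs0 : s ≠ 0) (hs1 : ‖s‖ ≤ 1) :
    jdFun A (rescaleKer P s) ≤
      1 / 2 * ∑ k, (‖P * A k * P‖ + ‖P * A k * (1 - P)‖ + ‖(1 - P) * A k * (1 - P)‖) ^ 2 := by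
  refine (jdFun_le_half_sum_norm_sq A _).trans ?_
  gcongr with k
  exact Matrix.norm_rescaleKer_conj_le hP (hPA k) hs0 hs1

/-- If the matrices `A₁, …, A_K` have a common nontrivial invariant subspace, then `f_𝒜`
does not blow up at every nonzero non-invertible matrix: there is a sequence of invertible
matrices converging to a nonzero non-invertible matrix along which `f_𝒜` stays bounded. -/
theorem jdFun_bounded_along_sequence_of_invariant_subspace {n K : ℕ}
    (A : Fin K → Matrix (Fin n) (Fin n) ℂ)
    (V : Submodule ℂ (Fin n → ℂ)) (hV0 : V ≠ ⊥) (hV1 : V ≠ ⊤)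
    (hinv : ∀ k, ∀ x ∈ V, (A k).mulVec x ∈ V) :
    ∃ (U : ℕ → Matrix (Fin n) (Fin n) ℂ) (U₀ : Matrix (Fin n) (Fin n) ℂ) (C : ℝ),
      (∀ m, IsUnit (U m)) ∧ U₀ ≠ 0 ∧ ¬ IsUnit U₀ ∧
      Tendsto U atTop (nhds U₀) ∧ ∀ m, jdFun A (U m) ≤ C := by
  obtain ⟨P, hP, hP0, hP1, hPA⟩ :=
    exists_isIdempotentElem_matrix_of_invtSubmodule A V hV0 hV1 hinv
  set s : ℕ → ℂ := fun m => ((m : ℂ) + 1)⁻¹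
  have hs0 (m : ℕ) : s m ≠ 0 := inv_ne_zero (Nat.cast_add_one_ne_zero m)
  have hs1 (m : ℕ) : ‖s m‖ ≤ 1 := by
    rw [norm_inv, ← Nat.cast_succ, Complex.norm_natCast]
    exact inv_le_one_of_one_le₀ (by simp)
  have hs : Tendsto s atTop (nhds 0) := by
    simpa only [one_div] using tendsto_one_div_add_atTop_nhds_zero_nat (𝕜 := ℂ)
  refine ⟨fun m => rescaleKer P (s m), P, _, fun m => hP.isUnit_rescaleKer (hs0 m), hP0,
    fun hu => hP1 ((IsIdempotentElem.iff_eq_one_of_isUnit hu).mp hP),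
    by simpa only [Function.comp_def, rescaleKer_zero] using
      ((continuous_rescaleKer P).tendsto 0).comp hs,
    fun m => jdFun_rescaleKer_le hP hPA (hs0 m) (hs1 m)⟩
end
end

section
/- Suppose the matrices in \mathcal{A} = {A_1,...,A_K} have no common nontrivial invariant subspace. Then for every fixed nonzero non-invertible matrix U_0 \in M_n(\mathbb{C}), f_{\mathcal{A}}(U) \to \infty as invertible U \to U_0. -/
noncomputable section

open Matrix Filter

attribute [local instance] Matrix.frobeniusNormedAddCommGroup

/-!
Suppose `jdFun A U < C` along invertible `U → U₀`. Then the off-diagonal entries of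
`Bₖ = U⁻¹ Aₖ U` stay bounded, and column `j` of `Aₖ U = U Bₖ` reads `Aₖ uⱼ = ∑ₗ (Bₖ)ₗⱼ uₗ`.
When the `j`-th column of `U₀` is nonzero, the diagonal coefficient `(Bₖ)ⱼⱼ` is bounded too,
because `(Bₖ)ⱼⱼ uⱼ` is a difference of bounded terms and `uⱼ` stays away from `0`. With all
coefficients bounded, the limit `Aₖ U₀ eⱼ` lies in the (closed) column space of `U₀`. So the
range of `U₀` is a common invariant subspace, nonzero and proper because `U₀ ≠ 0` is singular.
-/

open Asymptotics Topology

section SpanLimit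

variable {α 𝕜 E ι : Type*} [NontriviallyNormedField 𝕜] [NormedAddCommGroup E] [NormedSpace 𝕜 E]
  {l : Filter α}

theorem isBigO_one_of_smul_isBigO_one {c : α → 𝕜} {v : α → E} {v₀ : E}
    (hv : Tendsto v l (𝓝 v₀)) (hv₀ : v₀ ≠ 0)
    (hcv : (fun x => c x • v x) =O[l] fun _ => (1 : ℝ)) :
    c =O[l] fun _ => (1 : ℝ) := by
  have hv_away : (fun _ => (1 : 𝕜)) =O[l] v :=
    (isBigO_const_left_iff_pos_le_norm one_ne_zero).2 ⟨‖v₀‖ / 2, by positivity,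
      hv.norm.eventually (eventually_ge_nhds (half_lt_self (norm_pos_iff.2 hv₀)))⟩
  have hc : c =O[l] fun x => c x • v x := by
    simpa using (isBigO_refl c l).smul hv_away
  exact hc.trans hcv

theorem mem_span_of_tendsto_sum_smul [Fintype ι] [CompleteSpace 𝕜] [l.NeBot]
    {u : α → ι → E} {u₀ : ι → E} {a : α → ι → 𝕜} {y : E}
    (hu : ∀ i, Tendsto (u · i) l (𝓝 (u₀ i))) (ha : ∀ i, (a · i) =O[l] fun _ => (1 : ℝ))
    (hy : Tendsto (fun x => ∑ i, a x i • u x i) l (𝓝 y)) :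
    y ∈ Submodule.span 𝕜 (Set.range u₀) := by
  have herr : Tendsto (fun x => ∑ i, a x i • (u x i - u₀ i)) l (𝓝 0) := by
    simpa using tendsto_finsetSum Finset.univ fun i _ =>
      ((isBigO_one_iff ℝ).1 (ha i)).smul_tendsto_zero (tendsto_sub_nhds_zero_iff.2 (hu i))
  have hlim : Tendsto (fun x => ∑ i, a x i • u₀ i) l (𝓝 y) := by
    simpa [smul_sub, Finset.sum_sub_distrib] using hy.sub herr
  have := FiniteDimensional.span_of_finite 𝕜 (Set.finite_range u₀)
  exact (Submodule.closed_of_finiteDimensional _).mem_of_tendsto hlim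
    (Eventually.of_forall fun x => Submodule.sum_mem _ fun i _ =>
      Submodule.smul_mem _ _ (Submodule.subset_span ⟨i, rfl⟩))

theorem mem_span_of_tendsto_sum_smul_of_ne_zero [Fintype ι] [DecidableEq ι] [CompleteSpace 𝕜]
    [l.NeBot] {u : α → ι → E} {u₀ : ι → E} {a : α → ι → 𝕜} {y : E} (j : ι)
    (hu : ∀ i, Tendsto (u · i) l (𝓝 (u₀ i))) (hj : u₀ j ≠ 0)
    (ha : ∀ i, i ≠ j → (a · i) =O[l] fun _ => (1 : ℝ))
    (hy : Tendsto (fun x => ∑ i, a x i • u x i) l (𝓝 y)) :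
    y ∈ Submodule.span 𝕜 (Set.range u₀) := by
  have hrest : (fun x => ∑ i ∈ Finset.univ.erase j, a x i • u x i) =O[l] fun _ => (1 : ℝ) :=
    IsBigO.fun_sum fun i hi => by
      simpa only [smul_eq_mul, mul_one] using
        (ha i (Finset.ne_of_mem_erase hi)).smul ((hu i).isBigO_one ℝ)
  have haj : (a · j) =O[l] fun _ => (1 : ℝ) := by
    refine isBigO_one_of_smul_isBigO_one (hu j) hj (((hy.isBigO_one ℝ).sub hrest).congr_left ?_)
    intro x
    rw [← Finset.add_sum_erase _ _ (Finset.mem_univ j), add_sub_cancel_right]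
  refine mem_span_of_tendsto_sum_smul hu (fun i => ?_) hy
  rcases eq_or_ne i j with rfl | hi
  exacts [haj, ha i hi]

end SpanLimit

namespace Matrix

variable {n R : Type*} [Fintype n]

theorem col_mul_eq_sum_smul_col [CommSemiring R] (U B : Matrix n n R) (j : n) :
    (U * B).col j = ∑ l, B l j • U.col l := by
  ext i
  simp [mul_apply, Finset.sum_apply, mul_comm]

theorem col_mul_eq_mulVec_col [CommSemiring R] (A U : Matrix n n R) (j : n) :
    (A * U).col j = A *ᵥ U.col j := by
  ext i
  simp [mul_apply, mulVec, dotProduct]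

theorem mulVec_mem_range_mulVecLin [CommSemiring R] {A M : Matrix n n R}
    (h : ∀ j, (A * M).col j ∈ Submodule.span R (Set.range M.col)) {v : n → R}
    (hv : v ∈ LinearMap.range M.mulVecLin) : A *ᵥ v ∈ LinearMap.range M.mulVecLin := by
  obtain ⟨w, rfl⟩ := hv
  have hle : LinearMap.range (A * M).mulVecLin ≤ LinearMap.range M.mulVecLin := by
    rw [range_mulVecLin, range_mulVecLin]
    exact Submodule.span_le.2 (Set.range_subset_iff.2 h)
  exact hle ⟨w, by simp [mulVec_mulVec]⟩

theorem eq_zero_of_range_mulVecLin_eq_bot [CommSemiring R] [DecidableEq n] {M : Matrix n n R}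
    (h : LinearMap.range M.mulVecLin = ⊥) : M = 0 := by
  ext i j
  simpa using congrFun (congrArg (· (Pi.single j 1)) (LinearMap.range_eq_bot.1 h)) i

theorem isUnit_of_range_mulVecLin_eq_top [CommRing R] [DecidableEq n] {M : Matrix n n R}
    (h : LinearMap.range M.mulVecLin = ⊤) : IsUnit M :=
  mulVec_surjective_iff_isUnit.1 (LinearMap.range_eq_top.1 h)

theorem col_mul_mem_span_col_of_tendsto {α 𝕜 : Type*} [NontriviallyNormedField 𝕜]
    [CompleteSpace 𝕜] [DecidableEq n] {l : Filter α} [l.NeBot]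
    {U : α → Matrix n n 𝕜} {U₀ A : Matrix n n 𝕜} (hU : Tendsto U l (𝓝 U₀))
    (hunit : ∀ᶠ x in l, IsUnit (U x))
    (hoff : ∀ i j, i ≠ j → (fun x => ((U x)⁻¹ * A * U x) i j) =O[l] fun _ => (1 : ℝ))
    (j : n) : (A * U₀).col j ∈ Submodule.span 𝕜 (Set.range U₀.col) := by
  by_cases hj : U₀.col j = 0
  · rw [col_mul_eq_mulVec_col, hj, mulVec_zero]
    exact Submodule.zero_mem _
  have hcol_cont : ∀ i, Continuous fun M : Matrix n n 𝕜 => M.col i := fun i =>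
    continuous_pi fun k => continuous_id.matrix_elem k i
  have hcol : ∀ i, Tendsto (fun x => (U x).col i) l (𝓝 (U₀.col i)) := fun i =>
    ((hcol_cont i).tendsto U₀).comp hU
  have hexpand : ∀ᶠ x in l,
      (A * U x).col j = ∑ i, ((U x)⁻¹ * A * U x) i j • (U x).col i := by
    filter_upwards [hunit] with x hx
    rw [← col_mul_eq_sum_smul_col, Matrix.mul_assoc, mul_nonsing_inv_cancel_left _ _
      ((isUnit_iff_isUnit_det _).1 hx)]
  refine mem_span_of_tendsto_sum_smul_of_ne_zero j hcol hj (fun i hi => hoff i j hi) ?_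
  exact ((((hcol_cont j).comp (continuous_const.matrix_mul continuous_id)).tendsto U₀).comp
    hU).congr' hexpand

end Matrix

theorem sq_norm_conj_apply_le_two_mul_jdFun {n K : ℕ} (A : Fin K → Matrix (Fin n) (Fin n) ℂ)
    (U : Matrix (Fin n) (Fin n) ℂ) (k : Fin K) {i j : Fin n} (hij : i ≠ j) :
    ‖(U⁻¹ * A k * U) i j‖ ^ 2 ≤ 2 * jdFun A U := by
  have hterm : ∀ k' (i' j' : Fin n),
      0 ≤ if i' = j' then (0 : ℝ) else ‖(U⁻¹ * A k' * U) i' j'‖ ^ 2 := by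
    intro k' i' j'
    split_ifs <;> positivity
  calc ‖(U⁻¹ * A k * U) i j‖ ^ 2 = if i = j then 0 else ‖(U⁻¹ * A k * U) i j‖ ^ 2 :=
        (if_neg hij).symm
    _ ≤ ∑ j', if i = j' then 0 else ‖(U⁻¹ * A k * U) i j'‖ ^ 2 :=
        Finset.single_le_sum (fun j' _ => hterm k i j') (Finset.mem_univ j)
    _ ≤ ∑ i', ∑ j', if i' = j' then 0 else ‖(U⁻¹ * A k * U) i' j'‖ ^ 2 :=
        Finset.single_le_sum (fun i' _ => Finset.sum_nonneg fun j' _ => hterm k i' j')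
          (Finset.mem_univ i)
    _ ≤ ∑ k', ∑ i', ∑ j', if i' = j' then 0 else ‖(U⁻¹ * A k' * U) i' j'‖ ^ 2 :=
        Finset.single_le_sum (fun k' _ => Finset.sum_nonneg fun i' _ =>
          Finset.sum_nonneg fun j' _ => hterm k' i' j') (Finset.mem_univ k)
    _ = 2 * jdFun A U := by
        rw [jdFun]
        ring

/-- If the matrices in `𝒜` have no common nontrivial invariant subspace, then for every
fixed nonzero non-invertible `U₀`, `f_𝒜(U) → ∞` as invertible `U → U₀`. -/
theorem jdFun_tendsto_atTop_of_no_invariant_subspace {n K : ℕ}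
    (A : Fin K → Matrix (Fin n) (Fin n) ℂ)
    (hno : ∀ V : Submodule ℂ (Fin n → ℂ),
      (∀ k, ∀ x ∈ V, (A k).mulVec x ∈ V) → V = ⊥ ∨ V = ⊤)
    (U₀ : Matrix (Fin n) (Fin n) ℂ) (hU₀ : U₀ ≠ 0) (hU₀' : ¬ IsUnit U₀) :
    Tendsto (jdFun A)
      (nhdsWithin U₀ {U : Matrix (Fin n) (Fin n) ℂ | IsUnit U}) atTop := by
  by_contra hnot
  obtain ⟨C, hC⟩ : ∃ C, ∃ᶠ U in 𝓝[{U | IsUnit U}] U₀, jdFun A U < C := by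
    simpa [tendsto_atTop] using hnot
  set l := 𝓝[{U | IsUnit U}] U₀ ⊓ 𝓟 {U | jdFun A U < C}
  have : l.NeBot := frequently_iff_neBot.1 hC
  have hoff : ∀ k i j, i ≠ j →
      (fun U : Matrix (Fin n) (Fin n) ℂ => (U⁻¹ * A k * U) i j) =O[l] fun _ => (1 : ℝ) := by
    refine fun k i j hij => IsBigO.of_bound √(2 * C) ?_
    filter_upwards [mem_inf_of_right (mem_principal_self _)] with U hU
    rw [norm_one, mul_one]
    exact Real.le_sqrt_of_sq_le ((sq_norm_conj_apply_le_two_mul_jdFun A U k hij).trans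
      (by linarith [show jdFun A U < C from hU]))
  have hlim : Tendsto id l (𝓝 U₀) := tendsto_id.mono_left (inf_le_left.trans nhdsWithin_le_nhds)
  have hunit : ∀ᶠ U in l, IsUnit U := mem_inf_of_left self_mem_nhdsWithin
  have hinv : ∀ k, ∀ x ∈ LinearMap.range U₀.mulVecLin,
      (A k).mulVec x ∈ LinearMap.range U₀.mulVecLin := fun k _ =>
    mulVec_mem_range_mulVecLin (col_mul_mem_span_col_of_tendsto hlim hunit (hoff k))
  rcases hno _ hinv with h | h
  exacts [hU₀ (eq_zero_of_range_mulVecLin_eq_bot h), hU₀' (isUnit_of_range_mulVecLin_eq_top h)]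
end
end

section
/- The Hessian operator H_{\mathcal{A}}|_U(Z) = \sum_k U^{-*}([D_k^*, J\diamond[D_k,U^{-1}Z]] + [(U^{-1}Z)^*, J\diamond D_k]D_k^* + [J\diamond D_k, (U^{-1}ZD_k)^*]) represents the bilinear Hessian: \mathcal{H}_{\mathcal{A}}(Z,W) = \mathrm{Re}\langle H_{\mathcal{A}}|_U(Z), W\rangle_F for all Z, W \in M_n(\mathbb{C}), where \mathcal{H}_{\mathcal{A}}(Z,W) = \sum_k \mathrm{Re}\langle J\diamond[D_k, U^{-1}Z],[D_k,U^{-1}W]\rangle_F + \mathrm{Re}\langle J\diamond D_k, [U^{-1}Z, U^{-1}W D_k] + [U^{-1}W, U^{-1}Z D_k]\rangle_F. -/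
noncomputable section

open Matrix

/-- The complex Frobenius inner product on `M_n(ℂ)`. -/
def frob {n : ℕ} (X Y : Matrix (Fin n) (Fin n) ℂ) : ℂ :=
  ∑ i, ∑ j, X i j * star (Y i j)

/-- The zero-diagonal all-ones matrix. -/
def Jmat (n : ℕ) : Matrix (Fin n) (Fin n) ℂ :=
  Matrix.of fun i j => if i = j then 0 else 1

/-- Commutator of matrices. -/
def com {n : ℕ} (X Y : Matrix (Fin n) (Fin n) ℂ) : Matrix (Fin n) (Fin n) ℂ :=
  X * Y - Y * X

/-! The identity holds before taking real parts: each summand of the operator is obtained by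
moving the linear maps applied to `W` in the bilinear form to the left slot of `⟨·, ·⟩_F`,
using that the adjoints of `Q ↦ A Q`, `Q ↦ Q A`, `Q ↦ [D, Q]` and `Q ↦ [Q, R]` are
`M ↦ A* M`, `M ↦ M A*`, `M ↦ [D*, M]` and `M ↦ [M, R*]`. The Hadamard factors `J ⋄ ·` never
move. -/

namespace Frob

variable {n : ℕ}

lemma eq_trace (X Y : Matrix (Fin n) (Fin n) ℂ) : frob X Y = (X * Yᴴ).trace := by
  simp [frob, trace, mul_apply, conjTranspose_apply]

lemma add_left (X Y W : Matrix (Fin n) (Fin n) ℂ) : frob (X + Y) W = frob X W + frob Y W := by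
  simp [eq_trace, add_mul]

lemma add_right (W X Y : Matrix (Fin n) (Fin n) ℂ) : frob W (X + Y) = frob W X + frob W Y := by
  simp [eq_trace, mul_add]

lemma sub_left (X Y W : Matrix (Fin n) (Fin n) ℂ) : frob (X - Y) W = frob X W - frob Y W := by
  simp [eq_trace, sub_mul]

lemma sub_right (W X Y : Matrix (Fin n) (Fin n) ℂ) : frob W (X - Y) = frob W X - frob W Y := by
  simp [eq_trace, mul_sub]

lemma sum_left {ι : Type*} (s : Finset ι) (f : ι → Matrix (Fin n) (Fin n) ℂ)
    (W : Matrix (Fin n) (Fin n) ℂ) : frob (∑ k ∈ s, f k) W = ∑ k ∈ s, frob (f k) W := by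
  simp [eq_trace, Finset.sum_mul]

lemma conjTranspose_mul_left (A M Q : Matrix (Fin n) (Fin n) ℂ) :
    frob (Aᴴ * M) Q = frob M (A * Q) := by
  rw [eq_trace, eq_trace, conjTranspose_mul, Matrix.mul_assoc, trace_mul_comm,
    Matrix.mul_assoc]

lemma mul_conjTranspose_left (M A Q : Matrix (Fin n) (Fin n) ℂ) :
    frob (M * Aᴴ) Q = frob M (Q * A) := by
  rw [eq_trace, eq_trace, conjTranspose_mul, Matrix.mul_assoc]

lemma com_conjTranspose_left (D M Q : Matrix (Fin n) (Fin n) ℂ) :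
    frob (com Dᴴ M) Q = frob M (com D Q) := by
  rw [com, com, sub_left, sub_right, conjTranspose_mul_left, mul_conjTranspose_left]

lemma com_conjTranspose_right (M R Q : Matrix (Fin n) (Fin n) ℂ) :
    frob (com M Rᴴ) Q = frob M (com Q R) := by
  rw [com, com, sub_left, sub_right, conjTranspose_mul_left, mul_conjTranspose_left]

end Frob

lemma frob_hessian_summand {n : ℕ} (V D G E X W : Matrix (Fin n) (Fin n) ℂ) :
    frob (Vᴴ * (com Dᴴ G + com Xᴴ E * Dᴴ + com E (X * D)ᴴ)) W =
      frob G (com D (V * W)) + frob E (com X (V * W * D) + com (V * W) (X * D)) := by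
  rw [Frob.conjTranspose_mul_left, Frob.add_left, Frob.add_left, Frob.add_right,
    Frob.com_conjTranspose_left, Frob.mul_conjTranspose_left, Frob.com_conjTranspose_left,
    Frob.com_conjTranspose_right, add_assoc]

theorem hessian_operator_represents_bilinear_general {n K : ℕ}
    (A : Fin K → Matrix (Fin n) (Fin n) ℂ)
    (U : Matrix (Fin n) (Fin n) ℂ)
    (Z W : Matrix (Fin n) (Fin n) ℂ) :
    (∑ k, ((frob (Matrix.hadamard (Jmat n) (com (U⁻¹ * A k * U) (U⁻¹ * Z)))
              (com (U⁻¹ * A k * U) (U⁻¹ * W))).re +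
          (frob (Matrix.hadamard (Jmat n) (U⁻¹ * A k * U))
              (com (U⁻¹ * Z) ((U⁻¹ * W) * (U⁻¹ * A k * U)) +
               com (U⁻¹ * W) ((U⁻¹ * Z) * (U⁻¹ * A k * U)))).re)) =
    (frob (∑ k, (U⁻¹)ᴴ *
        (com (U⁻¹ * A k * U)ᴴ
            (Matrix.hadamard (Jmat n) (com (U⁻¹ * A k * U) (U⁻¹ * Z))) +
         com (U⁻¹ * Z)ᴴ (Matrix.hadamard (Jmat n) (U⁻¹ * A k * U)) *
            (U⁻¹ * A k * U)ᴴ +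
         com (Matrix.hadamard (Jmat n) (U⁻¹ * A k * U))
            ((U⁻¹ * Z * (U⁻¹ * A k * U))ᴴ))) W).re := by
  rw [Frob.sum_left, Complex.re_sum]
  refine Finset.sum_congr rfl fun k _ => ?_
  rw [frob_hessian_summand, Complex.add_re]

/-- The Hessian operator `H_𝒜|_U` represents the bilinear Hessian `ℋ_𝒜`:
`ℋ_𝒜(Z, W) = Re ⟨H_𝒜|_U(Z), W⟩_F` for all `Z, W`. -/
theorem hessian_operator_represents_bilinear {n K : ℕ}
    (A : Fin K → Matrix (Fin n) (Fin n) ℂ)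
    (U : Matrix (Fin n) (Fin n) ℂ) (hU : IsUnit U)
    (Z W : Matrix (Fin n) (Fin n) ℂ) :
    (∑ k, ((frob (Matrix.hadamard (Jmat n) (com (U⁻¹ * A k * U) (U⁻¹ * Z)))
              (com (U⁻¹ * A k * U) (U⁻¹ * W))).re +
          (frob (Matrix.hadamard (Jmat n) (U⁻¹ * A k * U))
              (com (U⁻¹ * Z) ((U⁻¹ * W) * (U⁻¹ * A k * U)) +
               com (U⁻¹ * W) ((U⁻¹ * Z) * (U⁻¹ * A k * U)))).re)) =
    (frob (∑ k, (U⁻¹)ᴴ *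
        (com (U⁻¹ * A k * U)ᴴ
            (Matrix.hadamard (Jmat n) (com (U⁻¹ * A k * U) (U⁻¹ * Z))) +
         com (U⁻¹ * Z)ᴴ (Matrix.hadamard (Jmat n) (U⁻¹ * A k * U)) *
            (U⁻¹ * A k * U)ᴴ +
         com (Matrix.hadamard (Jmat n) (U⁻¹ * A k * U))
            ((U⁻¹ * Z * (U⁻¹ * A k * U))ᴴ))) W).re :=
  hessian_operator_represents_bilinear_general A U Z W
end
end
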